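/- arXiv:1811.08807 — 4 statements merged into one kernel-verified Lean document; each statement's English description precedes it below -/
import Mathlib

section
/- Let t ≥ 4 and k ≥ 4 be integers, α ≥ 0 an integer, u ≥ 0 a natural number, and set s = t + k + 1 + 2u. Suppose a and b are nonnegative integers satisfying (s-1)·a + b = I_{t,k}(s) - 4 - α·(s-t-k-1)/2. Then 6a ≤ s^2 + 7s - (t+k)^2 - 3(t+k) - 8. -/
/-- `I t k s` is the rational number `I_{t,k}(s)` of the paper. -/
def Itk (t k s : ℤ) : ℚ :=
  ((s - t - k + 1 : ℤ) : ℚ) / 6 *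
    (((s - t - k + 3) * (s - t - k + 2) + 3 * (t + k) * (s - t - k + 2) + 6 * k * t : ℤ) : ℚ)

theorem stmt3 (t k α : ℤ) (ht : t ≥ 4) (hk : k ≥ 4) (hα : α ≥ 0) (u : ℕ)
    (s : ℤ) (hs : s = t + k + 1 + 2 * u)
    (a b : ℤ) (ha : 0 ≤ a) (hb : 0 ≤ b)
    (heq : (((s - 1) * a + b : ℤ) : ℚ) = Itk t k s - 4 - (α : ℚ) * (s - t - k - 1) / 2) :
    6 * a ≤ s ^ 2 + 7 * s - (t + k) ^ 2 - 3 * (t + k) - 8 := by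
  have hu : (0:ℤ) ≤ (u:ℤ) := Int.natCast_nonneg u
  have key : 6 * ((s - 1) * a + b) =
      (s - t - k + 1) * ((s - t - k + 3) * (s - t - k + 2)
        + 3 * (t + k) * (s - t - k + 2) + 6 * k * t) - 24 - 3 * α * (s - t - k - 1) := by
    have h6 := heq
    rw [Itk] at h6
    field_simp at h6
    have h7 : ((6 * ((s - 1) * a + b) : ℤ) : ℚ) =
        (((s - t - k + 1) * ((s - t - k + 3) * (s - t - k + 2)
          + 3 * (t + k) * (s - t - k + 2) + 6 * k * t) - 24 - 3 * α * (s - t - k - 1) : ℤ) : ℚ) := by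
      push_cast
      push_cast at h6
      linear_combination h6 / 2
    exact_mod_cast h7
  subst hs
  have hpos : (0:ℤ) < t + k + 2*(u:ℤ) := by linarith
  nlinarith [key, hpos, hb, mul_nonneg hα hu, sq_nonneg (t-k),
    mul_nonneg hu (show (0:ℤ) ≤ 4*t^2+4*k^2-4*k*t-52 by nlinarith [sq_nonneg (t-k)])]
end

section
/- Let t, k be positive integers, let A and B be positive rational numbers with t + k ≥ 4A + 2B, and let s ≥ t + k + 1 be an integer. Set d := (t^2 + t + k^2 + k)/2. If (s-1)·d + I_{t,k}(s) ≥ A·s^2 + B·s, then (s+1)·d + I_{t,k}(s+2) ≥ A·(s+2)^2 + B·(s+2). -/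
theorem Itk_add_two (t k s : ℤ) :
    Itk t k (s + 2) = Itk t k s + ((s : ℚ) + 3) ^ 2 - ((t ^ 2 + t + k ^ 2 + k : ℤ) : ℚ) := by
  simp only [Itk]
  push_cast
  ring

theorem quadratic_add_two_le {A B s : ℚ} (hB : 0 ≤ B) (hs : 0 ≤ s) (hAB : 4 * A + 2 * B ≤ s - 1) :
    A * (s + 2) ^ 2 + B * (s + 2) ≤ A * s ^ 2 + B * s + (s + 3) ^ 2 := by
  have hAs : 4 * A * s ≤ (s - 1) * s := mul_le_mul_of_nonneg_right (by linarith) hs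
  nlinarith

theorem stmt6_general (t k : ℤ) (A B : ℚ) (hA : 0 < A) (hB : 0 < B)
    (htk : ((t + k : ℤ) : ℚ) ≥ 4 * A + 2 * B) (s : ℤ) (hs : s ≥ t + k + 1)
    (d : ℚ) (hd : d = ((t ^ 2 + t + k ^ 2 + k : ℤ) : ℚ) / 2)
    (h : ((s - 1 : ℤ) : ℚ) * d + Itk t k s ≥ A * (s : ℚ) ^ 2 + B * s) :
    ((s + 1 : ℤ) : ℚ) * d + Itk t k (s + 2) ≥ A * ((s : ℚ) + 2) ^ 2 + B * ((s : ℚ) + 2) := by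
  have hs' : ((t + k : ℤ) : ℚ) + 1 ≤ s := by exact_mod_cast hs
  have hstep := quadratic_add_two_le (A := A) (s := s) hB.le (by linarith) (by linarith)
  rw [Itk_add_two]
  push_cast at h hd ⊢
  linarith

theorem stmt6 (t k : ℤ) (ht : 0 < t) (hk : 0 < k) (A B : ℚ) (hA : 0 < A) (hB : 0 < B)
    (htk : ((t + k : ℤ) : ℚ) ≥ 4 * A + 2 * B) (s : ℤ) (hs : s ≥ t + k + 1)
    (d : ℚ) (hd : d = ((t ^ 2 + t + k ^ 2 + k : ℤ) : ℚ) / 2)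
    (h : ((s - 1 : ℤ) : ℚ) * d + Itk t k s ≥ A * (s : ℚ) ^ 2 + B * s) :
    ((s + 1 : ℤ) : ℚ) * d + Itk t k (s + 2) ≥ A * ((s : ℚ) + 2) ^ 2 + B * ((s : ℚ) + 2) :=
  stmt6_general t k A B hA hB htk s hs d hd h
end

section
/- Define g_x := 1 + x(x+1)(2x-5)/6 for natural numbers x. Let t, k be positive integers with t ≥ 1000^5, and let g be a rational number such that g_{t+1} > (999999/1000000)·g and g_k ≤ g - g_t. Then 30k ≤ t. -/
/-!
Since `g_x = x³/3 - x²/2 - 5x/6 + 1`, we have `x³/3 - x² ≤ g_x ≤ x³/3`. If `30k > t`, then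
`g_k ≳ (t/30)³/3`, which is about `1/27000` of `g_t`, far more than the relative gap `10⁻⁶`
allowed between `g_t + g_k ≤ g` and `g_{t+1} > (1 - 10⁻⁶) g`.
-/

/-- `gfun x = 1 + x(x+1)(2x-5)/6`, the arithmetic genus of the curve `C_x`. -/
def gfun (x : ℕ) : ℚ := 1 + (x : ℚ) * (x + 1) * (2 * x - 5) / 6

lemma cube_div_three_sub_sq_le_gfun (x : ℕ) : (x : ℚ) ^ 3 / 3 - (x : ℚ) ^ 2 ≤ gfun x := by
  unfold gfun
  nlinarith [sq_nonneg ((x : ℚ) - 1)]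

lemma gfun_le_cube_div_three {x : ℕ} (hx : 1 ≤ x) : gfun x ≤ (x : ℚ) ^ 3 / 3 := by
  have hx' : (1 : ℚ) ≤ x := by exact_mod_cast hx
  unfold gfun
  nlinarith

lemma cube_div_three_sub_sq_le_of_le {α : Type*} [Field α] [LinearOrder α] [IsStrictOrderedRing α]
    {a b : α} (ha : 2 ≤ a) (hab : a ≤ b) : a ^ 3 / 3 - a ^ 2 ≤ b ^ 3 / 3 - b ^ 2 := by
  -- `b³/3 - b² - (a³/3 - a²) = (b - a)(a² + ab + b² - 3(a + b))/3`
  have hQ : 0 ≤ a ^ 2 + a * b + b ^ 2 - 3 * (a + b) := by nlinarith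
  nlinarith [mul_nonneg (sub_nonneg.2 hab) hQ]

lemma million_mul_cube_le {t : ℚ} (ht : 1000 ^ 2 ≤ t) :
    1000000 * ((t + 1) ^ 3 / 3) ≤
      999999 * (((t + 1) / 30) ^ 3 / 3 - ((t + 1) / 30) ^ 2 + (t ^ 3 / 3 - t ^ 2)) := by
  nlinarith [mul_nonneg (mul_nonneg (sub_nonneg.2 ht) (sub_nonneg.2 ht)) (sub_nonneg.2 ht),
    mul_nonneg (sub_nonneg.2 ht) (sub_nonneg.2 ht)]

theorem stmt9_general (t k : ℕ) (ht : t ≥ 1000 ^ 5) (g : ℚ)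
    (h1 : gfun (t + 1) > (999999 / 1000000) * g)
    (h2 : gfun k ≤ g - gfun t) :
    30 * k ≤ t := by
  by_contra! hlt
  have ht' : (1000 ^ 2 : ℚ) ≤ t := by exact_mod_cast (show 1000 ^ 2 ≤ 1000 ^ 5 by norm_num).trans ht
  have hs : ((t : ℚ) + 1) / 30 ≤ k := by
    rw [div_le_iff₀ (by norm_num)]
    exact_mod_cast (show t + 1 ≤ k * 30 by omega)
  have hgk := (cube_div_three_sub_sq_le_of_le (by linarith) hs).trans
    (cube_div_three_sub_sq_le_gfun k)
  have hgt := cube_div_three_sub_sq_le_gfun t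
  have hgt1 := gfun_le_cube_div_three (Nat.succ_pos t)
  push_cast at hgt1
  linarith [million_mul_cube_le ht']

theorem stmt9 (t k : ℕ) (ht : t ≥ 1000 ^ 5) (hk : 0 < k) (g : ℚ)
    (h1 : gfun (t + 1) > (999999 / 1000000) * g)
    (h2 : gfun k ≤ g - gfun t) :
    30 * k ≤ t :=
  stmt9_general t k ht g h1 h2
end

section
/- Let m and t be positive integers with t ≥ 250. If m^3 + 3m^2 + 2m ≥ 2·t(t+1)(2t-5) + 30, then 50m > 79t. -/
theorem mul_add_one_mul_add_two_le {R : Type*} [Semiring R] [PartialOrder R] [IsOrderedRing R]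
    {a b : R} (ha : 0 ≤ a) (hab : a ≤ b) :
    a * (a + 1) * (a + 2) ≤ b * (b + 1) * (b + 2) := by
  have hb : 0 ≤ b := ha.trans hab
  gcongr
  all_goals bound

/-- Since `1.58 ^ 3 < 4`, the right side minus the left side is
`0.055688 t ^ 3 - 13.4892 t ^ 2 - 13.16 t + 30`, which is positive once `t ≥ 250`. -/
theorem cubic_lt_of_two_hundred_fifty_le {K : Type*} [Field K] [LinearOrder K]
    [IsStrictOrderedRing K] {t : K} (ht : 250 ≤ t) :
    1.58 * t * (1.58 * t + 1) * (1.58 * t + 2) < 2 * (t * (t + 1) * (2 * t - 5)) + 30 := by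
  have ht0 : 0 ≤ t := by linarith
  have hcubic_dominates : 13.16 * t < (0.055688 * t - 13.4892) * t ^ 2 := by
    nlinarith [mul_le_mul_of_nonneg_left ht ht0]
  nlinarith

theorem stmt11 (m t : ℤ) (hm : 0 < m) (ht : t ≥ 250)
    (h : m ^ 3 + 3 * m ^ 2 + 2 * m ≥ 2 * (t * (t + 1) * (2 * t - 5)) + 30) :
    50 * m > 79 * t := by
  by_contra! hle
  have hmt : (m : ℚ) ≤ 1.58 * t := by
    have : (50 * m : ℚ) ≤ 79 * t := by exact_mod_cast hle
    linarith
  refine lt_irrefl (2 * (t * (t + 1) * (2 * t - 5)) + 30 : ℚ) ?_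
  calc (2 * (t * (t + 1) * (2 * t - 5)) + 30 : ℚ)
      ≤ m ^ 3 + 3 * m ^ 2 + 2 * m := by exact_mod_cast h
    _ = m * (m + 1) * (m + 2) := by ring
    _ ≤ 1.58 * t * (1.58 * t + 1) * (1.58 * t + 2) :=
      mul_add_one_mul_add_two_le (by positivity) hmt
    _ < 2 * (t * (t + 1) * (2 * t - 5)) + 30 :=
      cubic_lt_of_two_hundred_fifty_le (by exact_mod_cast ht)
end
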